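/- Let A be a stochastic matrix, T a stochastic tensor, β ∈ [0,1], and define the tensor P_{ijk} = β T_{ijk} + (1−β) A_{ij}. If γ = α(1+β) < 1 then x = αPxx + (1−α)v has a unique solution x ∈ S₁, and with z the solution of z = αAz + (1−α)v, one has ‖x − z‖₁ ≤ (αβ/(1−α)) ‖T − A‖₁, where A is regarded as the tensor A_{ijk} = A_{ij}. -/

import Mathlib

open Finset Filter Topology

noncomputable section

/-- The probability simplex in `ℝⁿ`. -/
def S1 (n : ℕ) : Set (Fin n → ℝ) := {x | (∀ i, 0 ≤ x i) ∧ ∑ i, x i = 1}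

/-- Zero-sum vectors of ℓ¹ norm one. -/
def Z1 (n : ℕ) : Set (Fin n → ℝ) := {y | ∑ i, y i = 0 ∧ ∑ i, |y i| = 1}

/-- Tensor-vector-vector product `(Pxy)_i = ∑_{j,k} P_{ijk} x_j y_k`. -/
def tvv {n : ℕ} (P : Fin n → Fin n → Fin n → ℝ) (x y : Fin n → ℝ) : Fin n → ℝ :=
  fun i => ∑ j, ∑ k, P i j k * x j * y k

/-- A (column) stochastic third-order tensor. -/
def Stochastic {n : ℕ} (P : Fin n → Fin n → Fin n → ℝ) : Prop :=
  (∀ i j k, 0 ≤ P i j k) ∧ ∀ j k, ∑ i, P i j k = 1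

/-- A column stochastic matrix. -/
def StochasticM {n : ℕ} (P : Fin n → Fin n → ℝ) : Prop :=
  (∀ i j, 0 ≤ P i j) ∧ ∀ j, ∑ i, P i j = 1

/-- Higher-order ergodicity coefficient `T_L`. -/
def TL {n : ℕ} (P : Fin n → Fin n → Fin n → ℝ) : ℝ :=
  sSup {r | ∃ x ∈ S1 n, ∃ y ∈ Z1 n, r = ∑ i, |tvv P x y i|}

/-- Higher-order ergodicity coefficient `T_R`. -/
def TR {n : ℕ} (P : Fin n → Fin n → Fin n → ℝ) : ℝ :=
  sSup {r | ∃ x ∈ S1 n, ∃ y ∈ Z1 n, r = ∑ i, |tvv P y x i|}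

/-- Higher-order ergodicity coefficient `T`. -/
def TT {n : ℕ} (P : Fin n → Fin n → Fin n → ℝ) : ℝ :=
  sSup {r | ∃ x ∈ S1 n, ∃ y ∈ Z1 n, r = ∑ i, |tvv P x y i + tvv P y x i|}

/-- Tensor 1-norm `‖P‖₁ = max_{j,k} ∑_i |P_{ijk}|`. -/
def tnorm {n : ℕ} (P : Fin n → Fin n → Fin n → ℝ) : ℝ :=
  ⨆ j, ⨆ k, ∑ i, |P i j k|

/-- 1-norm ergodicity coefficient of a matrix. -/
def tau1 {n : ℕ} (P : Fin n → Fin n → ℝ) : ℝ :=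
  sSup {r | ∃ y ∈ Z1 n, r = ∑ i, |∑ j, P i j * y j|}

/-! For `P = βT + (1 - β)A` the map `x ↦ αPxx + (1 - α)v` sends the simplex to itself, and
`Pxx - Pyy = P(x - y)x + Py(x - y)` makes it an `ℓ¹`-contraction with constant `α(1 + β)`: the
matrix part of `Py(x - y)` vanishes because `x - y` sums to zero. Banach's fixed point theorem gives
the unique solution `x`. Subtracting the equation of `z` gives `x - z = αβ(T - A)xx + αA(x - z)`,
and a stochastic matrix does not expand `ℓ¹`, so `‖x - z‖₁ ≤ αβ‖T - A‖₁ + α‖x - z‖₁`. -/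

section Tensor

variable {n : ℕ}

lemma sum_tvv {Q : Fin n → Fin n → Fin n → ℝ} (hQ : ∀ j k, ∑ i, Q i j k = 1)
    (u w : Fin n → ℝ) : ∑ i, tvv Q u w i = (∑ j, u j) * ∑ k, w k := by
  simp only [tvv, Finset.sum_mul_sum]
  rw [Finset.sum_comm]
  refine Finset.sum_congr rfl fun j _ => ?_
  rw [Finset.sum_comm]
  refine Finset.sum_congr rfl fun k _ => ?_
  rw [← Finset.sum_mul, ← Finset.sum_mul, hQ, one_mul]

lemma sum_abs_tvv_le {Q : Fin n → Fin n → Fin n → ℝ} (hQ : Stochastic Q) (u w : Fin n → ℝ) :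
    ∑ i, |tvv Q u w i| ≤ (∑ j, |u j|) * ∑ k, |w k| := by
  calc ∑ i, |tvv Q u w i| ≤ ∑ i, tvv Q (fun j => |u j|) (fun k => |w k|) i := by
        refine Finset.sum_le_sum fun i _ => ?_
        refine (Finset.abs_sum_le_sum_abs _ _).trans (Finset.sum_le_sum fun j _ => ?_)
        refine (Finset.abs_sum_le_sum_abs _ _).trans (Finset.sum_le_sum fun k _ => ?_)
        rw [abs_mul, abs_mul, abs_of_nonneg (hQ.1 i j k)]
    _ = (∑ j, |u j|) * ∑ k, |w k| := sum_tvv hQ.2 _ _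

lemma sum_abs_mulVec_le {A : Fin n → Fin n → ℝ} (hA : StochasticM A) (u : Fin n → ℝ) :
    ∑ i, |∑ j, A i j * u j| ≤ ∑ j, |u j| := by
  calc ∑ i, |∑ j, A i j * u j| ≤ ∑ i, ∑ j, A i j * |u j| := by
        refine Finset.sum_le_sum fun i _ => ?_
        refine (Finset.abs_sum_le_sum_abs _ _).trans (Finset.sum_le_sum fun j _ => ?_)
        rw [abs_mul, abs_of_nonneg (hA.1 i j)]
    _ = ∑ j, |u j| := by
        rw [Finset.sum_comm]
        simp only [← Finset.sum_mul, hA.2, one_mul]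

lemma tvv_smul_add_smul (T : Fin n → Fin n → Fin n → ℝ) (A : Fin n → Fin n → ℝ) (b c : ℝ)
    (u w : Fin n → ℝ) (i : Fin n) :
    tvv (fun i j k => b * T i j k + c * A i j) u w i
      = b * tvv T u w i + c * ((∑ j, A i j * u j) * ∑ k, w k) := by
  rw [Finset.sum_mul_sum]
  simp only [tvv, Finset.mul_sum, ← Finset.sum_add_distrib]
  refine Finset.sum_congr rfl fun j _ => Finset.sum_congr rfl fun k _ => ?_
  ring

lemma tvv_sub_tvv (P : Fin n → Fin n → Fin n → ℝ) (x y : Fin n → ℝ) (i : Fin n) :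
    tvv P x x i - tvv P y y i = tvv P (x - y) x i + tvv P y (x - y) i := by
  simp only [tvv, Pi.sub_apply, ← Finset.sum_sub_distrib, ← Finset.sum_add_distrib]
  refine Finset.sum_congr rfl fun j _ => Finset.sum_congr rfl fun k _ => ?_
  ring

lemma le_tnorm (Q : Fin n → Fin n → Fin n → ℝ) (j k : Fin n) : ∑ i, |Q i j k| ≤ tnorm Q :=
  (le_ciSup (Set.finite_range _).bddAbove k).trans
    (le_ciSup (f := fun j => ⨆ k, ∑ i, |Q i j k|) (Set.finite_range _).bddAbove j)

lemma sum_abs_tvv_le_tnorm (Q : Fin n → Fin n → Fin n → ℝ) {x : Fin n → ℝ} (hx : x ∈ S1 n) :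
    ∑ i, |tvv Q x x i| ≤ tnorm Q := by
  calc ∑ i, |tvv Q x x i| ≤ ∑ i, ∑ j, ∑ k, |Q i j k| * (x j * x k) := by
        refine Finset.sum_le_sum fun i _ => ?_
        refine (Finset.abs_sum_le_sum_abs _ _).trans (Finset.sum_le_sum fun j _ => ?_)
        refine (Finset.abs_sum_le_sum_abs _ _).trans (Finset.sum_le_sum fun k _ => ?_)
        rw [abs_mul, abs_mul, abs_of_nonneg (hx.1 j), abs_of_nonneg (hx.1 k), mul_assoc]
    _ = ∑ j, ∑ k, (∑ i, |Q i j k|) * (x j * x k) := by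
        rw [Finset.sum_comm]
        refine Finset.sum_congr rfl fun j _ => ?_
        rw [Finset.sum_comm]
        simp only [Finset.sum_mul]
    _ ≤ ∑ j, ∑ k, tnorm Q * (x j * x k) := by
        gcongr with j _ k _
        · exact mul_nonneg (hx.1 j) (hx.1 k)
        · exact le_tnorm Q j k
    _ = tnorm Q := by
        simp only [← Finset.mul_sum, hx.2, mul_one]

end Tensor

open Function

theorem exists_unique_isFixedPt_of_sum_abs_sub_le {n : ℕ} {S : Set (Fin n → ℝ)}
    (hS : IsClosed S) (hne : S.Nonempty) {g : (Fin n → ℝ) → Fin n → ℝ} (hg : Set.MapsTo g S S)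
    {K : ℝ} (hK : K < 1)
    (hcontr : ∀ x ∈ S, ∀ y ∈ S, ∑ i, |g x i - g y i| ≤ K * ∑ i, |x i - y i|) :
    ∃ x ∈ S, IsFixedPt g x ∧ ∀ y ∈ S, IsFixedPt g y → y = x := by
  let s : Set (PiLp 1 fun _ : Fin n => ℝ) := WithLp.ofLp ⁻¹' S
  have hs : IsClosed s := hS.preimage (PiLp.continuous_ofLp 1 _)
  have : CompleteSpace s := hs.completeSpace_coe
  have : Nonempty s := ⟨⟨WithLp.toLp 1 hne.some, hne.some_mem⟩⟩
  let f : s → s := fun x => ⟨WithLp.toLp 1 (g x.1), hg x.2⟩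
  have hf : ContractingWith K.toNNReal f := by
    refine ⟨Real.toNNReal_lt_one.mpr hK, LipschitzWith.of_dist_le_mul fun x y => ?_⟩
    simp only [Subtype.dist_eq, PiLp.dist_eq_of_L1, Real.dist_eq]
    exact (hcontr _ x.2 _ y.2).trans (by gcongr; exact Real.le_coe_toNNReal K)
  refine ⟨_, (ContractingWith.fixedPoint f hf).2,
    congrArg (WithLp.ofLp ∘ Subtype.val) hf.fixedPoint_isFixedPt, fun y hy hgy => ?_⟩
  have hfy : IsFixedPt f ⟨WithLp.toLp 1 y, hy⟩ := Subtype.ext (congrArg (WithLp.toLp 1) hgy)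
  exact congrArg (WithLp.ofLp ∘ Subtype.val) (hf.fixedPoint_unique hfy)

section MultilinearPageRank

variable {n : ℕ}

def mixTensor (β : ℝ) (T : Fin n → Fin n → Fin n → ℝ) (A : Fin n → Fin n → ℝ) :
    Fin n → Fin n → Fin n → ℝ :=
  fun i j k => β * T i j k + (1 - β) * A i j

lemma stochastic_mixTensor {T : Fin n → Fin n → Fin n → ℝ} {A : Fin n → Fin n → ℝ}
    (hT : Stochastic T) (hA : StochasticM A) {β : ℝ} (hβ : β ∈ Set.Icc (0 : ℝ) 1) :
    Stochastic (mixTensor β T A) := by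
  refine ⟨fun i j k => ?_, fun j k => ?_⟩
  · exact add_nonneg (mul_nonneg hβ.1 (hT.1 i j k)) (mul_nonneg (sub_nonneg.2 hβ.2) (hA.1 i j))
  · simp only [mixTensor, Finset.sum_add_distrib, ← Finset.mul_sum, hT.2 j k, hA.2 j]
    ring

lemma isClosed_S1 : IsClosed (S1 n) := by
  have : S1 n = (⋂ i, {x | 0 ≤ x i}) ∩ {x | ∑ i, x i = 1} := by
    ext x
    simp [S1, Set.mem_iInter]
  rw [this]
  exact (isClosed_iInter fun i => isClosed_le continuous_const (continuous_apply i)).inter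
    (isClosed_eq (continuous_finsetSum _ fun i _ => continuous_apply i) continuous_const)

lemma sum_abs_eq_of_mem_S1 {x : Fin n → ℝ} (hx : x ∈ S1 n) : ∑ i, |x i| = 1 := by
  rw [← hx.2]
  exact Finset.sum_congr rfl fun i _ => abs_of_nonneg (hx.1 i)

def pageRankMap (P : Fin n → Fin n → Fin n → ℝ) (α : ℝ) (v x : Fin n → ℝ) : Fin n → ℝ :=
  fun i => α * tvv P x x i + (1 - α) * v i

lemma mapsTo_pageRankMap {P : Fin n → Fin n → Fin n → ℝ} (hP : Stochastic P) {α : ℝ}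
    (hα : α ∈ Set.Icc (0 : ℝ) 1) {v : Fin n → ℝ} (hv : v ∈ S1 n) :
    Set.MapsTo (pageRankMap P α v) (S1 n) (S1 n) := by
  intro x hx
  refine ⟨fun i => ?_, ?_⟩
  · have : 0 ≤ tvv P x x i := Finset.sum_nonneg fun j _ => Finset.sum_nonneg fun k _ =>
      mul_nonneg (mul_nonneg (hP.1 i j k) (hx.1 j)) (hx.1 k)
    exact add_nonneg (mul_nonneg hα.1 this) (mul_nonneg (sub_nonneg.2 hα.2) (hv.1 i))
  · simp only [pageRankMap, Finset.sum_add_distrib, ← Finset.mul_sum, sum_tvv hP.2, hx.2, hv.2]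
    ring

lemma sum_abs_pageRankMap_sub_le {T : Fin n → Fin n → Fin n → ℝ} {A : Fin n → Fin n → ℝ}
    (hT : Stochastic T) (hA : StochasticM A) {β : ℝ} (hβ : β ∈ Set.Icc (0 : ℝ) 1) {α : ℝ}
    (hα : 0 ≤ α) (v : Fin n → ℝ) {x y : Fin n → ℝ} (hx : x ∈ S1 n) (hy : y ∈ S1 n) :
    ∑ i, |pageRankMap (mixTensor β T A) α v x i - pageRankMap (mixTensor β T A) α v y i|
      ≤ α * (1 + β) * ∑ i, |x i - y i| := by
  set F := pageRankMap (mixTensor β T A) α v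
  obtain ⟨hβ0, hβ1⟩ := hβ
  have hd : ∑ k, (x - y) k = 0 := by simp [Finset.sum_sub_distrib, hx.2, hy.2]
  have hkey : ∀ i, F x i - F y i = α * β * tvv T (x - y) x i + α * β * tvv T y (x - y) i
      + α * (1 - β) * ∑ j, A i j * (x - y) j := by
    intro i
    calc F x i - F y i = α * (tvv _ x x i - tvv _ y y i) := by simp only [F, pageRankMap]; ring
      _ = _ := by
        unfold mixTensor
        rw [tvv_sub_tvv, tvv_smul_add_smul, tvv_smul_add_smul, hd, hx.2]
        ring
  have hT₁ := sum_abs_tvv_le hT (x - y) x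
  have hT₂ := sum_abs_tvv_le hT y (x - y)
  have hA₁ := sum_abs_mulVec_le hA (x - y)
  rw [sum_abs_eq_of_mem_S1 hx] at hT₁
  rw [sum_abs_eq_of_mem_S1 hy] at hT₂
  calc ∑ i, |F x i - F y i|
      ≤ ∑ i, (α * β * |tvv T (x - y) x i| + α * β * |tvv T y (x - y) i|
          + α * (1 - β) * |∑ j, A i j * (x - y) j|) := by
        refine Finset.sum_le_sum fun i _ => (hkey i ▸ abs_add_three _ _ _).trans_eq ?_
        simp only [abs_mul, abs_of_nonneg hα, abs_of_nonneg hβ0, abs_of_nonneg (sub_nonneg.2 hβ1)]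
    _ = α * β * ∑ i, |tvv T (x - y) x i| + α * β * ∑ i, |tvv T y (x - y) i|
          + α * (1 - β) * ∑ i, |∑ j, A i j * (x - y) j| := by
        simp only [Finset.sum_add_distrib, Finset.mul_sum]
    _ ≤ α * β * ((∑ i, |(x - y) i|) * 1) + α * β * (1 * ∑ i, |(x - y) i|)
          + α * (1 - β) * ∑ i, |(x - y) i| := by gcongr
    _ = α * (1 + β) * ∑ i, |x i - y i| := by simp only [Pi.sub_apply]; ring

lemma sum_abs_sub_le_of_isFixedPt_pageRankMap {T : Fin n → Fin n → Fin n → ℝ}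
    {A : Fin n → Fin n → ℝ} (hA : StochasticM A) {β α : ℝ} (hβ : 0 ≤ β) (hα0 : 0 ≤ α)
    (hα1 : α < 1) {v x z : Fin n → ℝ} (hx : x ∈ S1 n)
    (hxv : IsFixedPt (pageRankMap (mixTensor β T A) α v) x)
    (hzv : ∀ i, z i = α * ∑ j, A i j * z j + (1 - α) * v i) :
    ∑ i, |x i - z i| ≤ α * β / (1 - α) * tnorm (fun i j k => T i j k - A i j) := by
  set D : Fin n → Fin n → Fin n → ℝ := fun i j k => T i j k - A i j
  have hkey : ∀ i, x i - z i = α * β * tvv D x x i + α * ∑ j, A i j * (x j - z j) := by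
    intro i
    have hD := tvv_smul_add_smul T A 1 (-1) x x i
    simp only [one_mul, neg_one_mul, ← sub_eq_add_neg] at hD
    have hxi := congrFun hxv i
    unfold pageRankMap mixTensor at hxi
    rw [tvv_smul_add_smul, hx.2] at hxi
    rw [hD, hx.2]
    simp only [mul_sub, Finset.sum_sub_distrib]
    linear_combination -hxi - hzv i
  have hDx := sum_abs_tvv_le_tnorm D hx
  have hA₁ := sum_abs_mulVec_le hA (x - z)
  have hmain : ∑ i, |x i - z i| ≤ α * β * tnorm D + α * ∑ i, |x i - z i| :=
    calc ∑ i, |x i - z i|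
        ≤ ∑ i, (α * β * |tvv D x x i| + α * |∑ j, A i j * (x - z) j|) := by
          refine Finset.sum_le_sum fun i _ => (hkey i ▸ abs_add_le _ _).trans_eq ?_
          simp only [abs_mul, abs_of_nonneg hα0, abs_of_nonneg hβ, Pi.sub_apply]
      _ = α * β * ∑ i, |tvv D x x i| + α * ∑ i, |∑ j, A i j * (x - z) j| := by
          simp only [Finset.sum_add_distrib, Finset.mul_sum]
      _ ≤ α * β * tnorm D + α * ∑ i, |(x - z) i| := by gcongr
  rw [div_mul_eq_mul_div, le_div_iff₀ (by linarith)]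
  linarith

end MultilinearPageRank

theorem stmt19 {n : ℕ} (A : Fin n → Fin n → ℝ) (hA : StochasticM A)
    (T : Fin n → Fin n → Fin n → ℝ) (hT : Stochastic T)
    (β : ℝ) (hβ : β ∈ Set.Icc (0 : ℝ) 1)
    (α : ℝ) (hα0 : 0 < α) (hα1 : α < 1) (v : Fin n → ℝ) (hv : v ∈ S1 n)
    (P : Fin n → Fin n → Fin n → ℝ)
    (hPdef : P = fun i j k => β * T i j k + (1 - β) * A i j)
    (hγ : α * (1 + β) < 1) :
    ∃ x ∈ S1 n, (∀ i, x i = α * tvv P x x i + (1 - α) * v i) ∧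
      (∀ x' ∈ S1 n, (∀ i, x' i = α * tvv P x' x' i + (1 - α) * v i) → x' = x) ∧
      ∀ z ∈ S1 n, (∀ i, z i = α * ∑ j, A i j * z j + (1 - α) * v i) →
        ∑ i, |x i - z i| ≤ α * β / (1 - α) * tnorm (fun i j k => T i j k - A i j) := by
  subst hPdef
  obtain ⟨x, hx, hfix, hunique⟩ := exists_unique_isFixedPt_of_sum_abs_sub_le isClosed_S1 ⟨v, hv⟩
    (mapsTo_pageRankMap (stochastic_mixTensor hT hA hβ) ⟨hα0.le, hα1.le⟩ hv) hγ
    fun x hx y hy => sum_abs_pageRankMap_sub_le hT hA hβ hα0.le v hx hy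
  refine ⟨x, hx, fun i => (congrFun hfix i).symm, fun y hy hyfix => ?_, fun z _ hz => ?_⟩
  · exact hunique y hy (funext fun i => (hyfix i).symm)
  · exact sum_abs_sub_le_of_isFixedPt_pageRankMap hA hβ.1 hα0.le hα1 hx hfix hz
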